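/- arXiv:1902.02983 — 6 statements merged into one kernel-verified Lean document; each statement's English description precedes it below -/
import Mathlib

section
/- Let (T, μ) be a measure space, 1 ≤ q < p < ∞, and κ = pq/(p−q). Suppose M : L^p(T, μ) → L^q(F, λ) is a bounded linear operator (for some measure space (F, λ)) with the locality property that whenever f vanishes μ-a.e. on a measurable set A ⊆ T, the image Mf vanishes λ-a.e. on a corresponding measurable set F_A, where A ↦ F_A preserves disjointness and countable unions. Define Φ(A) = sup over nonzero f supported in A of (‖Mf‖_{L^q(F_A)} / ‖f‖_{L^p(A)})^κ. Then Φ is finitely additive on disjoint measurable sets: Φ(A₁ ∪ A₂) = Φ(A₁) + Φ(A₂) whenever A₁ ∩ A₂ = ∅. -/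
/-!
`Φ(A) ^ κ⁻¹` is the best constant `C` in `‖M f‖_{L^q(F_A)} ≤ C ‖f‖_{L^p}` for `f` supported in
`A`, where `κ⁻¹ + p⁻¹ = q⁻¹`. For disjoint `A₁, A₂`, additivity and locality of `M` split `f`
supported in `A₁ ∪ A₂` into `fᵢ = 1_{Aᵢ} f` with `‖f‖_p^p = Σ ‖fᵢ‖_p^p` and
`‖M f‖_q^q = Σ ‖M fᵢ‖_q^q` (the latter over `F_{A₁ ∪ A₂} = F_{A₁} ⊔ F_{A₂}`). Hence
`Φ(A₁ ∪ A₂) ≤ Φ(A₁) + Φ(A₂)` by Hölder's inequality with exponents `κ / q` and `p / q`: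
`Σ Φᵢ^{q/κ} (‖fᵢ‖_p^p)^{q/p} ≤ (Σ Φᵢ)^{q/κ} (Σ ‖fᵢ‖_p^p)^{q/p}`.
Conversely, rescale `fᵢ` supported in `Aᵢ` so that `‖fᵢ‖_p^p = ‖M fᵢ‖_q^q = rᵢ^κ`, where `rᵢ` is
the ratio of the two norms. This normalisation is additive over disjoint pieces, and a normalised
function `g` has ratio exactly `(‖g‖_p^p)^κ⁻¹`, so `f₁ + f₂` shows `r₁^κ + r₂^κ ≤ Φ(A₁ ∪ A₂)`.
-/

open MeasureTheory ENNReal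

/-- The set function `Φ(A)` : supremum over nonzero `f ∈ L^p` supported in `A` of
`(‖Mf‖_{L^q(F_A)} / ‖f‖_{L^p(A)})^κ`. -/
noncomputable def PhiSet {T F : Type*} [MeasurableSpace T] [MeasurableSpace F]
    (μ : Measure T) (lam : Measure F) (M : (T → ℝ) → (F → ℝ)) (FA : Set T → Set F)
    (p q κ : ℝ) (A : Set T) : ℝ≥0∞ :=
  ⨆ f : {f : T → ℝ // MemLp f (ENNReal.ofReal p) μ ∧ (∀ᵐ t ∂μ, t ∉ A → f t = 0) ∧
      eLpNorm f (ENNReal.ofReal p) μ ≠ 0},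
    (eLpNorm (M f.1) (ENNReal.ofReal q) (lam.restrict (FA A)) /
      eLpNorm f.1 (ENNReal.ofReal p) μ) ^ κ

lemma Set.iUnion_ite_eq_zero {α : Type*} (A B : Set α) :
    ⋃ n : ℕ, (if n = 0 then A else B) = A ∪ B := by
  ext x
  simp only [Set.mem_iUnion, Set.mem_union]
  refine ⟨fun ⟨n, hn⟩ => ?_, ?_⟩
  · split_ifs at hn <;> tauto
  · rintro (h | h)
    exacts [⟨0, by simpa⟩, ⟨1, by simpa⟩]

lemma map_union_of_map_iUnion {α β : Type*} {Ψ : Set α → Set β}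
    (hΨ : ∀ A : ℕ → Set α, Ψ (⋃ i, A i) = ⋃ i, Ψ (A i)) (A B : Set α) :
    Ψ (A ∪ B) = Ψ A ∪ Ψ B := by
  simpa only [apply_ite Ψ, Set.iUnion_ite_eq_zero] using hΨ fun n => if n = 0 then A else B

lemma ENNReal.rpow_mul_rpow_add_rpow_mul_rpow_le {s t : ℝ} (hs : 0 < s) (ht : 0 < t)
    (hst : s + t = 1) (a₁ a₂ b₁ b₂ : ℝ≥0∞) :
    a₁ ^ s * b₁ ^ t + a₂ ^ s * b₂ ^ t ≤ (a₁ + a₂) ^ s * (b₁ + b₂) ^ t := by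
  have hconj : s⁻¹.HolderConjugate t⁻¹ := ⟨by simp [hst], by positivity, by positivity⟩
  have := ENNReal.inner_le_Lp_mul_Lq Finset.univ ![a₁ ^ s, a₂ ^ s] ![b₁ ^ t, b₂ ^ t] hconj
  simpa [Fin.sum_univ_two, ← ENNReal.rpow_mul, hs.ne', ht.ne'] using this

section LpPieces

variable {α E : Type*} [MeasurableSpace α] [NormedAddCommGroup E] {ν : Measure α} {r : ℝ}

lemma eLpNorm_rpow_add_measure (hr : 0 < r) (f : α → E) (ν₁ ν₂ : Measure α) :
    eLpNorm f (.ofReal r) (ν₁ + ν₂) ^ r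
      = eLpNorm f (.ofReal r) ν₁ ^ r + eLpNorm f (.ofReal r) ν₂ ^ r := by
  have key (ν : Measure α) : eLpNorm f (.ofReal r) ν ^ r = ∫⁻ x, ‖f x‖ₑ ^ r ∂ν := by
    rw [eLpNorm_eq_lintegral_rpow_enorm_toReal (by simpa using hr) ofReal_ne_top,
      toReal_ofReal hr.le, one_div, ENNReal.rpow_inv_rpow hr.ne']
  simp only [key, lintegral_add_measure]

lemma eLpNorm_restrict_union_rpow (hr : 0 < r) (f : α → E) {s t : Set α} (hst : Disjoint s t)
    (ht : MeasurableSet t) :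
    eLpNorm f (.ofReal r) (ν.restrict (s ∪ t)) ^ r
      = eLpNorm f (.ofReal r) (ν.restrict s) ^ r + eLpNorm f (.ofReal r) (ν.restrict t) ^ r := by
  rw [Measure.restrict_union hst ht, eLpNorm_rpow_add_measure hr]

lemma eLpNorm_restrict_eq_of_ae_notMem {p : ℝ≥0∞} {f : α → E} {s : Set α} (hs : MeasurableSet s)
    (hf : ∀ᵐ x ∂ν, x ∉ s → f x = 0) : eLpNorm f p (ν.restrict s) = eLpNorm f p ν := by
  rw [← eLpNorm_indicator_eq_eLpNorm_restrict hs]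
  exact eLpNorm_congr_ae (indicator_ae_eq_of_restrict_compl_ae_eq_zero hs
    ((ae_restrict_iff' hs.compl).2 hf))

lemma eLpNorm_rpow_eq_add_of_ae_eq_on (hr : 0 < r) {f g₁ g₂ : α → E} {s t : Set α}
    (hst : Disjoint s t) (hs : MeasurableSet s) (ht : MeasurableSet t)
    (hf : ∀ᵐ x ∂ν, x ∉ s ∪ t → f x = 0)
    (hg₁ : ∀ᵐ x ∂ν, x ∉ s → g₁ x = 0) (hg₂ : ∀ᵐ x ∂ν, x ∉ t → g₂ x = 0)
    (hfg₁ : ∀ᵐ x ∂ν, x ∈ s → f x = g₁ x) (hfg₂ : ∀ᵐ x ∂ν, x ∈ t → f x = g₂ x) :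
    eLpNorm f (.ofReal r) ν ^ r = eLpNorm g₁ (.ofReal r) ν ^ r + eLpNorm g₂ (.ofReal r) ν ^ r := by
  rw [← eLpNorm_restrict_eq_of_ae_notMem (hs.union ht) hf, eLpNorm_restrict_union_rpow hr f hst ht,
    ← eLpNorm_restrict_eq_of_ae_notMem hs hg₁, ← eLpNorm_restrict_eq_of_ae_notMem ht hg₂,
    eLpNorm_congr_ae ((ae_restrict_iff' hs).2 hfg₁), eLpNorm_congr_ae ((ae_restrict_iff' ht).2 hfg₂)]

end LpPieces

lemma monotone_of_map_iUnion {α β : Type*} {Ψ : Set α → Set β}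
    (hΨ : ∀ A : ℕ → Set α, Ψ (⋃ i, A i) = ⋃ i, Ψ (A i)) : Monotone Ψ := fun A B hAB => by
  rw [← Set.union_eq_right.2 hAB, map_union_of_map_iUnion hΨ]
  exact Set.subset_union_left

section RpowArith

variable {p q κ : ℝ}

lemma ENNReal.rpow_div_mul_self_rpow (hκ : κ.HolderTriple p q) (r : ℝ≥0∞) :
    (r ^ (κ / p) * r) ^ q = r ^ κ := by
  obtain ⟨hκ0, hp0, hq0⟩ := hκ.all_pos
  have h := hκ.inv_add_inv_eq_inv
  have hexp : κ / p * q + q = κ := by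
    field_simp at h ⊢
    linarith
  rw [ENNReal.mul_rpow_of_nonneg _ _ hq0.le, ← ENNReal.rpow_mul,
    ← ENNReal.rpow_add_of_nonneg _ _ (by positivity) hq0.le, hexp]

lemma ENNReal.div_rpow_eq_of_rpow_eq (hκ : κ.HolderTriple p q) {N x S : ℝ≥0∞}
    (hN : N ^ q = S) (hx : x ^ p = S) (hS0 : S ≠ 0) (hSt : S ≠ ⊤) : (N / x) ^ κ = S := by
  obtain ⟨hκ0, hp0, hq0⟩ := hκ.all_pos
  rw [← ENNReal.rpow_rpow_inv hq0.ne' N, ← ENNReal.rpow_rpow_inv hp0.ne' x, hN, hx,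
    ← ENNReal.rpow_sub _ _ hS0 hSt, hκ.inv_sub_inv_eq_inv, ENNReal.rpow_inv_rpow hκ0.ne']

end RpowArith

section PhiSet

variable {T F : Type*} [MeasurableSpace T] [MeasurableSpace F] {μ : Measure T} {lam : Measure F}
  {M : (T → ℝ) → (F → ℝ)} {FA : Set T → Set F} {p q κ : ℝ} {A A₁ A₂ : Set T} {f : T → ℝ}

variable (μ lam M FA) in
def IsLocalOperator : Prop :=
  ∀ (f : T → ℝ) (A : Set T), MeasurableSet A →
    (∀ᵐ t ∂μ, t ∈ A → f t = 0) → ∀ᵐ x ∂lam, x ∈ FA A → M f x = 0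

variable (μ lam M FA p q) in
noncomputable def phiRatio (A : Set T) (f : T → ℝ) : ℝ≥0∞ :=
  eLpNorm (M f) (.ofReal q) (lam.restrict (FA A)) / eLpNorm f (.ofReal p) μ

lemma le_phiSet (hf : MemLp f (.ofReal p) μ) (hfA : ∀ᵐ t ∂μ, t ∉ A → f t = 0)
    (hf0 : eLpNorm f (.ofReal p) μ ≠ 0) :
    phiRatio μ lam M FA p q A f ^ κ ≤ PhiSet μ lam M FA p q κ A :=
  le_iSup_of_le (⟨f, hf, hfA, hf0⟩ : Subtype _) le_rfl

lemma phiSet_mono (hFA : Monotone FA) (hκ : 0 ≤ κ) {B : Set T} (hAB : A ⊆ B) :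
    PhiSet μ lam M FA p q κ A ≤ PhiSet μ lam M FA p q κ B :=
  iSup_le fun ⟨_, hf, hfA, hf0⟩ =>
    (ENNReal.rpow_le_rpow (ENNReal.div_le_div_right (eLpNorm_mono_measure _
      (Measure.restrict_mono (hFA hAB) le_rfl)) _) hκ).trans
    (le_phiSet hf (hfA.mono fun _ h htB => h fun htA => htB (hAB htA)) hf0)

lemma apply_ae_eq_restrict_of_ae_eq_on (hadd : ∀ f g, M (f + g) = M f + M g)
    (hlocal : IsLocalOperator μ lam M FA) (hA : MeasurableSet A) (hFA : MeasurableSet (FA A))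
    {g : T → ℝ} (hfg : ∀ᵐ t ∂μ, t ∈ A → f t = g t) : M f =ᵐ[lam.restrict (FA A)] M g := by
  have hM : M f = M g + M (f - g) := by rw [← hadd, add_sub_cancel]
  filter_upwards [(ae_restrict_iff' hFA).2
    (hlocal (f - g) A hA (hfg.mono fun _ h ht => sub_eq_zero.2 (h ht)))] with x hx
  rw [hM, Pi.add_apply, hx, add_zero]

lemma eLpNorm_apply_rpow_union (hadd : ∀ f g, M (f + g) = M f + M g)
    (hlocal : IsLocalOperator μ lam M FA) (hq : 0 < q) (h₁ : MeasurableSet A₁)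
    (h₂ : MeasurableSet A₂) (hFA₁ : MeasurableSet (FA A₁)) (hFA₂ : MeasurableSet (FA A₂))
    (hFAunion : FA (A₁ ∪ A₂) = FA A₁ ∪ FA A₂) (hFAdisj : Disjoint (FA A₁) (FA A₂))
    {g₁ g₂ : T → ℝ} (hfg₁ : ∀ᵐ t ∂μ, t ∈ A₁ → f t = g₁ t) (hfg₂ : ∀ᵐ t ∂μ, t ∈ A₂ → f t = g₂ t) :
    eLpNorm (M f) (.ofReal q) (lam.restrict (FA (A₁ ∪ A₂))) ^ q
      = eLpNorm (M g₁) (.ofReal q) (lam.restrict (FA A₁)) ^ q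
        + eLpNorm (M g₂) (.ofReal q) (lam.restrict (FA A₂)) ^ q := by
  rw [hFAunion, eLpNorm_restrict_union_rpow hq _ hFAdisj hFA₂,
    eLpNorm_congr_ae (apply_ae_eq_restrict_of_ae_eq_on hadd hlocal h₁ hFA₁ hfg₁),
    eLpNorm_congr_ae (apply_ae_eq_restrict_of_ae_eq_on hadd hlocal h₂ hFA₂ hfg₂)]

lemma eLpNorm_apply_le_phiSet (hlocal : IsLocalOperator μ lam M FA) (hp : 0 < p) (hκ : 0 < κ)
    (hA : MeasurableSet A) (hFA : MeasurableSet (FA A)) (hf : MemLp f (.ofReal p) μ)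
    (hfA : ∀ᵐ t ∂μ, t ∉ A → f t = 0) :
    eLpNorm (M f) (.ofReal q) (lam.restrict (FA A))
      ≤ PhiSet μ lam M FA p q κ A ^ κ⁻¹ * eLpNorm f (.ofReal p) μ := by
  by_cases hf0 : eLpNorm f (.ofReal p) μ = 0
  · have hf_ae : f =ᵐ[μ] 0 := (eLpNorm_eq_zero_iff hf.1 (by simpa using hp)).1 hf0
    have hMf : M f =ᵐ[lam.restrict (FA A)] 0 :=
      (ae_restrict_iff' hFA).2 (hlocal f A hA (hf_ae.mono fun _ h _ => h))
    simp [eLpNorm_congr_ae hMf]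
  rw [← ENNReal.div_le_iff hf0 hf.eLpNorm_ne_top, ENNReal.le_rpow_inv_iff hκ]
  exact le_phiSet hf hfA hf0

theorem phiSet_union_le (hκ : κ.HolderTriple p q) (hadd : ∀ f g, M (f + g) = M f + M g)
    (hlocal : IsLocalOperator μ lam M FA) (h₁ : MeasurableSet A₁) (h₂ : MeasurableSet A₂)
    (hdisj : Disjoint A₁ A₂) (hFA₁ : MeasurableSet (FA A₁)) (hFA₂ : MeasurableSet (FA A₂))
    (hFAunion : FA (A₁ ∪ A₂) = FA A₁ ∪ FA A₂) (hFAdisj : Disjoint (FA A₁) (FA A₂)) :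
    PhiSet μ lam M FA p q κ (A₁ ∪ A₂)
      ≤ PhiSet μ lam M FA p q κ A₁ + PhiSet μ lam M FA p q κ A₂ := by
  refine iSup_le fun ⟨f, hf, hfA, hf0⟩ => ?_
  dsimp only
  obtain ⟨hκ0, hp0, hq0⟩ := hκ.all_pos
  have hpieces (B : Set T) : ∀ᵐ t ∂μ, t ∉ B → B.indicator f t = 0 :=
    ae_of_all _ fun _ ht => Set.indicator_of_notMem ht f
  have hagree (B : Set T) : ∀ᵐ t ∂μ, t ∈ B → f t = B.indicator f t :=
    ae_of_all _ fun _ ht => (Set.indicator_of_mem ht f).symm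
  have hx := eLpNorm_rpow_eq_add_of_ae_eq_on hp0 hdisj h₁ h₂ hfA (hpieces A₁) (hpieces A₂)
    (hagree A₁) (hagree A₂)
  have hN := eLpNorm_apply_rpow_union hadd hlocal hq0 h₁ h₂ hFA₁ hFA₂ hFAunion hFAdisj
    (hagree A₁) (hagree A₂)
  have hb₁ := eLpNorm_apply_le_phiSet (q := q) hlocal hp0 hκ0 h₁ hFA₁ (hf.indicator h₁)
    (hpieces A₁)
  have hb₂ := eLpNorm_apply_le_phiSet (q := q) hlocal hp0 hκ0 h₂ hFA₂ (hf.indicator h₂)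
    (hpieces A₂)
  have hsplit (Φ y : ℝ≥0∞) : (Φ ^ κ⁻¹ * y) ^ q = Φ ^ (q / κ) * (y ^ p) ^ (q / p) := by
    rw [ENNReal.mul_rpow_of_nonneg _ _ hq0.le, ← ENNReal.rpow_mul, ← ENNReal.rpow_mul,
      mul_div_cancel₀ _ hp0.ne', inv_mul_eq_div]
  have hexp : q / κ + q / p = 1 := by
    rw [div_eq_mul_inv, div_eq_mul_inv, ← mul_add, hκ.inv_add_inv_eq_inv, mul_inv_cancel₀ hq0.ne']
  rw [← ENNReal.le_rpow_inv_iff hκ0, ENNReal.div_le_iff hf0 hf.eLpNorm_ne_top,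
    ← ENNReal.rpow_le_rpow_iff hq0, hsplit, hN, hx]
  calc _ ≤ (PhiSet μ lam M FA p q κ A₁ ^ κ⁻¹ * eLpNorm (A₁.indicator f) (.ofReal p) μ) ^ q
        + (PhiSet μ lam M FA p q κ A₂ ^ κ⁻¹ * eLpNorm (A₂.indicator f) (.ofReal p) μ) ^ q := by
        gcongr
    _ ≤ _ := by
        rw [hsplit, hsplit]
        exact ENNReal.rpow_mul_rpow_add_rpow_mul_rpow_le (by positivity) (by positivity) hexp
          _ _ _ _

lemma exists_rpow_eLpNorm_smul_eq (hsmul : ∀ (c : ℝ) f, M (c • f) = c • M f)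
    (hκ : κ.HolderTriple p q) (hf0 : eLpNorm f (.ofReal p) μ ≠ 0)
    (hft : eLpNorm f (.ofReal p) μ ≠ ⊤) (hr : phiRatio μ lam M FA p q A f ≠ ⊤) :
    ∃ c : ℝ, eLpNorm (c • f) (.ofReal p) μ ^ p = phiRatio μ lam M FA p q A f ^ κ ∧
      eLpNorm (M (c • f)) (.ofReal q) (lam.restrict (FA A)) ^ q
        = phiRatio μ lam M FA p q A f ^ κ := by
  obtain ⟨hκ0, hp0, -⟩ := hκ.all_pos
  set r := phiRatio μ lam M FA p q A f
  have hct : r ^ (κ / p) / eLpNorm f (.ofReal p) μ ≠ ⊤ :=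
    ENNReal.div_ne_top (ENNReal.rpow_ne_top_of_nonneg (by positivity) hr) hf0
  refine ⟨(r ^ (κ / p) / eLpNorm f (.ofReal p) μ).toReal, ?_, ?_⟩
  · rw [eLpNorm_const_smul, Real.enorm_toReal hct, ENNReal.div_mul_cancel hf0 hft,
      ← ENNReal.rpow_mul, div_mul_cancel₀ _ hp0.ne']
  · rw [hsmul, eLpNorm_const_smul, Real.enorm_toReal hct, ← ENNReal.rpow_div_mul_self_rpow hκ r]
    congr 1
    simp only [r, phiRatio, div_eq_mul_inv]
    ring

lemma rpow_add_rpow_le_phiSet_union (hκ : κ.HolderTriple p q)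
    (hadd : ∀ f g, M (f + g) = M f + M g) (hsmul : ∀ (c : ℝ) f, M (c • f) = c • M f)
    (hlocal : IsLocalOperator μ lam M FA) (h₁ : MeasurableSet A₁) (h₂ : MeasurableSet A₂)
    (hdisj : Disjoint A₁ A₂) (hFA₁ : MeasurableSet (FA A₁)) (hFA₂ : MeasurableSet (FA A₂))
    (hFAunion : FA (A₁ ∪ A₂) = FA A₁ ∪ FA A₂) (hFAdisj : Disjoint (FA A₁) (FA A₂))
    {f₁ f₂ : T → ℝ} (hf₁ : MemLp f₁ (.ofReal p) μ) (hf₂ : MemLp f₂ (.ofReal p) μ)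
    (hf₁A : ∀ᵐ t ∂μ, t ∉ A₁ → f₁ t = 0) (hf₂A : ∀ᵐ t ∂μ, t ∉ A₂ → f₂ t = 0)
    (hf₁0 : eLpNorm f₁ (.ofReal p) μ ≠ 0) (hf₂0 : eLpNorm f₂ (.ofReal p) μ ≠ 0)
    (hr₁ : phiRatio μ lam M FA p q A₁ f₁ ≠ ⊤) (hr₂ : phiRatio μ lam M FA p q A₂ f₂ ≠ ⊤) :
    phiRatio μ lam M FA p q A₁ f₁ ^ κ + phiRatio μ lam M FA p q A₂ f₂ ^ κ
      ≤ PhiSet μ lam M FA p q κ (A₁ ∪ A₂) := by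
  obtain ⟨-, hp0, hq0⟩ := hκ.all_pos
  obtain ⟨c₁, hx₁, hN₁⟩ := exists_rpow_eLpNorm_smul_eq hsmul hκ hf₁0 hf₁.eLpNorm_ne_top hr₁
  obtain ⟨c₂, hx₂, hN₂⟩ := exists_rpow_eLpNorm_smul_eq hsmul hκ hf₂0 hf₂.eLpNorm_ne_top hr₂
  set g := c₁ • f₁ + c₂ • f₂
  have hg : MemLp g (.ofReal p) μ := (hf₁.const_smul c₁).add (hf₂.const_smul c₂)
  have hg₁A : ∀ᵐ t ∂μ, t ∉ A₁ → (c₁ • f₁) t = 0 := hf₁A.mono fun _ h ht => by simp [h ht]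
  have hg₂A : ∀ᵐ t ∂μ, t ∉ A₂ → (c₂ • f₂) t = 0 := hf₂A.mono fun _ h ht => by simp [h ht]
  have hgA : ∀ᵐ t ∂μ, t ∉ A₁ ∪ A₂ → g t = 0 := by
    filter_upwards [hg₁A, hg₂A] with t ht₁ ht₂ ht
    simp [g, ht₁ fun h => ht (.inl h), ht₂ fun h => ht (.inr h)]
  have hgg₁ : ∀ᵐ t ∂μ, t ∈ A₁ → g t = (c₁ • f₁) t :=
    hg₂A.mono fun _ h ht => by simp [g, h (hdisj.notMem_of_mem_left ht)]
  have hgg₂ : ∀ᵐ t ∂μ, t ∈ A₂ → g t = (c₂ • f₂) t :=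
    hg₁A.mono fun _ h ht => by simp [g, h (hdisj.notMem_of_mem_right ht)]
  have hx := eLpNorm_rpow_eq_add_of_ae_eq_on hp0 hdisj h₁ h₂ hgA hg₁A hg₂A hgg₁ hgg₂
  have hN := eLpNorm_apply_rpow_union hadd hlocal hq0 h₁ h₂ hFA₁ hFA₂ hFAunion hFAdisj hgg₁ hgg₂
  rw [hx₁, hx₂] at hx
  rw [hN₁, hN₂] at hN
  set S := phiRatio μ lam M FA p q A₁ f₁ ^ κ + phiRatio μ lam M FA p q A₂ f₂ ^ κ
  rcases eq_or_ne S 0 with hS0 | hS0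
  · simp [hS0]
  have hg0 : eLpNorm g (.ofReal p) μ ≠ 0 := fun h => hS0 (by rw [← hx, h, zero_rpow_of_pos hp0])
  have hSt : S ≠ ⊤ := hx ▸ rpow_ne_top_of_nonneg hp0.le hg.eLpNorm_ne_top
  rw [← ENNReal.div_rpow_eq_of_rpow_eq hκ hN hx hS0 hSt]
  exact le_phiSet hg hgA hg0

theorem phiSet_add_le_union (hκ : κ.HolderTriple p q)
    (hadd : ∀ f g, M (f + g) = M f + M g) (hsmul : ∀ (c : ℝ) f, M (c • f) = c • M f)
    (hlocal : IsLocalOperator μ lam M FA) (hFA : Monotone FA) (h₁ : MeasurableSet A₁)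
    (h₂ : MeasurableSet A₂) (hdisj : Disjoint A₁ A₂) (hFA₁ : MeasurableSet (FA A₁))
    (hFA₂ : MeasurableSet (FA A₂)) (hFAunion : FA (A₁ ∪ A₂) = FA A₁ ∪ FA A₂)
    (hFAdisj : Disjoint (FA A₁) (FA A₂)) :
    PhiSet μ lam M FA p q κ A₁ + PhiSet μ lam M FA p q κ A₂
      ≤ PhiSet μ lam M FA p q κ (A₁ ∪ A₂) := by
  have hκ0 := hκ.pos
  have hmono {B : Set T} (hB : B ⊆ A₁ ∪ A₂) :
      PhiSet μ lam M FA p q κ B ≤ PhiSet μ lam M FA p q κ (A₁ ∪ A₂) :=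
    phiSet_mono hFA hκ0.le hB
  rcases eq_or_ne (PhiSet μ lam M FA p q κ A₁) 0 with h0 | h₁0
  · simpa [h0] using hmono Set.subset_union_right
  rcases eq_or_ne (PhiSet μ lam M FA p q κ A₂) 0 with h0 | h₂0
  · simpa [h0] using hmono Set.subset_union_left
  rcases eq_or_ne (PhiSet μ lam M FA p q κ (A₁ ∪ A₂)) ⊤ with htop | hfin
  · exact htop ▸ le_top
  have hfinite {r : ℝ≥0∞} (hr : r ^ κ ≤ PhiSet μ lam M FA p q κ (A₁ ∪ A₂)) : r ≠ ⊤ :=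
    (ENNReal.rpow_eq_top_iff_of_pos hκ0).not.1 (ne_top_of_le_ne_top hfin hr)
  refine le_of_forall_lt fun c hc => ?_
  obtain ⟨a, ha, b, hb, hab⟩ := ENNReal.exists_lt_add_of_lt_add hc h₁0 h₂0
  obtain ⟨⟨f₁, hf₁, hf₁A, hf₁0⟩, ha⟩ := lt_iSup_iff.1 ha
  obtain ⟨⟨f₂, hf₂, hf₂A, hf₂0⟩, hb⟩ := lt_iSup_iff.1 hb
  refine hab.trans_le ((add_le_add ha.le hb.le).trans ?_)
  exact rpow_add_rpow_le_phiSet_union hκ hadd hsmul hlocal h₁ h₂ hdisj hFA₁ hFA₂ hFAunion hFAdisj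
    hf₁ hf₂ hf₁A hf₂A hf₁0 hf₂0
    (hfinite ((le_phiSet hf₁ hf₁A hf₁0).trans (hmono Set.subset_union_left)))
    (hfinite ((le_phiSet hf₂ hf₂A hf₂0).trans (hmono Set.subset_union_right)))

end PhiSet

theorem phiSet_finitely_additive_general
    {T F : Type*} [MeasurableSpace T] [MeasurableSpace F]
    (μ : Measure T) (lam : Measure F)
    (p q κ : ℝ) (hq : 1 ≤ q) (hpq : q < p) (hκ : κ = p * q / (p - q))
    (M : (T → ℝ) → (F → ℝ))
    (hadd : ∀ f g, M (f + g) = M f + M g)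
    (hsmul : ∀ (c : ℝ) f, M (c • f) = c • M f)
    (FA : Set T → Set F)
    (hFAmeas : ∀ A, MeasurableSet A → MeasurableSet (FA A))
    (hlocal : ∀ (f : T → ℝ) (A : Set T), MeasurableSet A →
      (∀ᵐ t ∂μ, t ∈ A → f t = 0) → (∀ᵐ x ∂lam, x ∈ FA A → M f x = 0))
    (hFAdisj : ∀ A B : Set T, Disjoint A B → Disjoint (FA A) (FA B))
    (hFAunion : ∀ A : ℕ → Set T, FA (⋃ i, A i) = ⋃ i, FA (A i))
    (A₁ A₂ : Set T) (h₁ : MeasurableSet A₁) (h₂ : MeasurableSet A₂)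
    (hdisj : A₁ ∩ A₂ = ∅) :
    PhiSet μ lam M FA p q κ (A₁ ∪ A₂) =
      PhiSet μ lam M FA p q κ A₁ + PhiSet μ lam M FA p q κ A₂ := by
  have hq0 : 0 < q := by linarith
  have hp0 : 0 < p := by linarith
  have hκpq : κ.HolderTriple p q :=
    ⟨by rw [hκ]; field_simp; ring, hκ ▸ div_pos (mul_pos hp0 hq0) (sub_pos.2 hpq), hp0⟩
  have hdisj' : Disjoint A₁ A₂ := Set.disjoint_iff_inter_eq_empty.2 hdisj
  have hFAun := map_union_of_map_iUnion hFAunion A₁ A₂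
  exact le_antisymm
    (phiSet_union_le hκpq hadd hlocal h₁ h₂ hdisj' (hFAmeas _ h₁) (hFAmeas _ h₂) hFAun
      (hFAdisj _ _ hdisj'))
    (phiSet_add_le_union hκpq hadd hsmul hlocal (monotone_of_map_iUnion hFAunion) h₁ h₂ hdisj'
      (hFAmeas _ h₁) (hFAmeas _ h₂) hFAun (hFAdisj _ _ hdisj'))

/-- Finite additivity of the set function `Φ` associated with a bounded local operator
`M : L^p(T,μ) → L^q(F,λ)`, `1 ≤ q < p < ∞`, `κ = pq/(p-q)`. -/
theorem phiSet_finitely_additive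
    {T F : Type*} [MeasurableSpace T] [MeasurableSpace F]
    (μ : Measure T) (lam : Measure F)
    (p q κ : ℝ) (hq : 1 ≤ q) (hpq : q < p) (hκ : κ = p * q / (p - q))
    (M : (T → ℝ) → (F → ℝ))
    (hadd : ∀ f g, M (f + g) = M f + M g)
    (hsmul : ∀ (c : ℝ) f, M (c • f) = c • M f)
    (K : ℝ≥0∞) (hK : K ≠ ⊤)
    (hbdd : ∀ f : T → ℝ, MemLp f (ENNReal.ofReal p) μ →
      eLpNorm (M f) (ENNReal.ofReal q) lam ≤ K * eLpNorm f (ENNReal.ofReal p) μ)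
    (FA : Set T → Set F)
    (hFAmeas : ∀ A, MeasurableSet A → MeasurableSet (FA A))
    (hlocal : ∀ (f : T → ℝ) (A : Set T), MeasurableSet A →
      (∀ᵐ t ∂μ, t ∈ A → f t = 0) → (∀ᵐ x ∂lam, x ∈ FA A → M f x = 0))
    (hFAdisj : ∀ A B : Set T, Disjoint A B → Disjoint (FA A) (FA B))
    (hFAunion : ∀ A : ℕ → Set T, FA (⋃ i, A i) = ⋃ i, FA (A i))
    (A₁ A₂ : Set T) (h₁ : MeasurableSet A₁) (h₂ : MeasurableSet A₂)
    (hdisj : A₁ ∩ A₂ = ∅) :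
    PhiSet μ lam M FA p q κ (A₁ ∪ A₂) =
      PhiSet μ lam M FA p q κ A₁ + PhiSet μ lam M FA p q κ A₂ :=
  phiSet_finitely_additive_general μ lam p q κ hq hpq hκ M hadd hsmul FA hFAmeas hlocal hFAdisj
    hFAunion A₁ A₂ h₁ h₂ hdisj
end

section
/- Let (T, μ), (S, ν) be σ-finite measure spaces, 1 ≤ q ≤ p < ∞, and ψ : S → T measurable with ν ∘ ψ⁻¹ ≪ μ and J = d(ν∘ψ⁻¹)/dμ. If J^{1/q} ∈ L^κ(T, μ), where κ = pq/(p−q) for p > q and κ = ∞ for p = q, then the composition operator C_ψ f = f ∘ ψ is bounded from L^p(T, μ) to L^q(S, ν) with norm at most ‖J^{1/q}‖_{L^κ(T,μ)}. -/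
/-!
Pushing `ν` forward along `ψ` and passing to the density `J` turns `‖f ∘ ψ‖_q^q` into
`∫ |f|^q J dμ = ‖J^{1/q} |f|‖_q^q`. Since `1/q = 1/p + 1/κ`, Hölder's inequality bounds this by
`‖J^{1/q}‖_κ ‖f‖_p`; for `p = q` one bounds `J^{1/q}` by its essential supremum instead.
-/

open MeasureTheory ENNReal

/-- The `L^κ` norm of a nonnegative (`ℝ≥0∞`-valued) function, with `κ = pq/(p-q)` if
`p > q` and `κ = ∞` (essential supremum) if `p = q`. -/
noncomputable def lKappaNorm {T : Type*} [MeasurableSpace T] (μ : Measure T)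
    (p q : ℝ) (g : T → ℝ≥0∞) : ℝ≥0∞ :=
  if p = q then essSup g μ
  else (∫⁻ t, g t ^ (p * q / (p - q)) ∂μ) ^ ((p - q) / (p * q))

section WeightedHolder

variable {T : Type*} [MeasurableSpace T] {μ : Measure T} {p q : ℝ} {g F : T → ℝ≥0∞}

theorem lintegral_mul_rpow_le_essSup_mul (hq : 0 < q) (hF : AEMeasurable F μ) :
    (∫⁻ t, (g t * F t) ^ q ∂μ) ^ (1 / q) ≤ essSup g μ * (∫⁻ t, F t ^ q ∂μ) ^ (1 / q) := by
  calc (∫⁻ t, (g t * F t) ^ q ∂μ) ^ (1 / q)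
      ≤ (∫⁻ t, essSup g μ ^ q * F t ^ q ∂μ) ^ (1 / q) := by
        gcongr ?_ ^ _
        refine lintegral_mono_ae ?_
        filter_upwards [ENNReal.ae_le_essSup g] with t ht
        rw [← ENNReal.mul_rpow_of_nonneg _ _ hq.le]
        gcongr
    _ = essSup g μ * (∫⁻ t, F t ^ q ∂μ) ^ (1 / q) := by
        rw [lintegral_const_mul'' _ (hF.pow_const q),
          ENNReal.mul_rpow_of_nonneg _ _ (by positivity), one_div, ENNReal.rpow_rpow_inv hq.ne']

theorem lintegral_mul_rpow_le_lintegral_rpow_mul (hq : 0 < q) (hqp : q < p)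
    (hg : AEMeasurable g μ) (hF : AEMeasurable F μ) :
    (∫⁻ t, (g t * F t) ^ q ∂μ) ^ (1 / q) ≤
      (∫⁻ t, g t ^ (p * q / (p - q)) ∂μ) ^ ((p - q) / (p * q)) * (∫⁻ t, F t ^ p ∂μ) ^ (1 / p) := by
  have hexp : 1 / q = 1 / p + 1 / (p * q / (p - q)) := by
    have := (hq.trans hqp).ne'
    have := (sub_pos.2 hqp).ne'
    field_simp
    ring
  simpa only [Pi.mul_apply, mul_comm, one_div_div] using
    ENNReal.lintegral_Lp_mul_le_Lq_mul_Lr hq hqp hexp μ hF hg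

theorem lintegral_mul_rpow_le_lKappaNorm_mul (hq : 0 < q) (hqp : q ≤ p)
    (hg : AEMeasurable g μ) (hF : AEMeasurable F μ) :
    (∫⁻ t, (g t * F t) ^ q ∂μ) ^ (1 / q) ≤ lKappaNorm μ p q g * (∫⁻ t, F t ^ p ∂μ) ^ (1 / p) := by
  rcases hqp.eq_or_lt with rfl | hqp
  · simpa only [lKappaNorm, if_pos] using lintegral_mul_rpow_le_essSup_mul hq hF
  · simpa only [lKappaNorm, if_neg hqp.ne'] using
      lintegral_mul_rpow_le_lintegral_rpow_mul hq hqp hg hF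

end WeightedHolder

theorem eLpNorm_ofReal_eq_lintegral {α E : Type*} [MeasurableSpace α] [TopologicalSpace E]
    [ContinuousENorm E] {μ : Measure α} {p : ℝ} (hp : 0 < p) (f : α → E) :
    eLpNorm f (ENNReal.ofReal p) μ = (∫⁻ x, ‖f x‖ₑ ^ p ∂μ) ^ (1 / p) := by
  rw [eLpNorm_eq_lintegral_rpow_enorm_toReal (by simpa using hp) ofReal_ne_top,
    toReal_ofReal hp.le]

theorem lintegral_comp_eq_lintegral_rnDeriv_mul {S T : Type*} [MeasurableSpace S]
    [MeasurableSpace T] {μ : Measure T} {ν : Measure S} [SigmaFinite μ] [SFinite ν] {ψ : S → T}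
    (hψ : AEMeasurable ψ ν) (habs : ν.map ψ ≪ μ) {F : T → ℝ≥0∞} (hF : AEMeasurable F μ) :
    ∫⁻ s, F (ψ s) ∂ν = ∫⁻ t, (ν.map ψ).rnDeriv μ t * F t ∂μ := by
  rw [← lintegral_map' (hF.mono_ac habs) hψ, lintegral_rnDeriv_mul habs hF]

theorem composition_operator_bounded_of_memLkappa_general
    {T S : Type*} [MeasurableSpace T] [MeasurableSpace S]
    (μ : Measure T) (ν : Measure S) [SigmaFinite μ] [SigmaFinite ν]
    (p q : ℝ) (hq : 1 ≤ q) (hpq : q ≤ p)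
    (ψ : S → T) (hψ : Measurable ψ)
    (habs : Measure.map ψ ν ≪ μ)
    (J : T → ℝ≥0∞) (hJ : J = (Measure.map ψ ν).rnDeriv μ) :
    ∀ f : T → ℝ, Measurable f →
      eLpNorm (fun s => f (ψ s)) (ENNReal.ofReal q) ν ≤
        lKappaNorm μ p q (fun t => J t ^ (1 / q)) * eLpNorm f (ENNReal.ofReal p) μ := by
  intro f hf
  have hq0 : 0 < q := one_pos.trans_le hq
  have hJm : Measurable J := hJ ▸ Measure.measurable_rnDeriv _ _
  have hweight : ∀ t, (J t ^ (1 / q) * ‖f t‖ₑ) ^ q = J t * ‖f t‖ₑ ^ q := fun t => by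
    rw [ENNReal.mul_rpow_of_nonneg _ _ hq0.le, one_div, ENNReal.rpow_inv_rpow hq0.ne']
  rw [eLpNorm_ofReal_eq_lintegral hq0, eLpNorm_ofReal_eq_lintegral (hq0.trans_le hpq),
    lintegral_comp_eq_lintegral_rnDeriv_mul hψ.aemeasurable habs
      (hf.enorm.pow_const q).aemeasurable, ← hJ]
  simp_rw [← hweight]
  exact lintegral_mul_rpow_le_lKappaNorm_mul hq0 hpq (hJm.pow_const _).aemeasurable
    hf.enorm.aemeasurable

/-- Sufficiency: if `J^{1/q} ∈ L^κ(T,μ)` (`κ = pq/(p-q)` for `p > q`, `κ = ∞` for `p = q`),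
where `J = d(ν∘ψ⁻¹)/dμ`, then the composition operator `C_ψ f = f ∘ ψ` is bounded from
`L^p(T,μ)` to `L^q(S,ν)` with norm at most `‖J^{1/q}‖_{L^κ}`. -/
theorem composition_operator_bounded_of_memLkappa
    {T S : Type*} [MeasurableSpace T] [MeasurableSpace S]
    (μ : Measure T) (ν : Measure S) [SigmaFinite μ] [SigmaFinite ν]
    (p q : ℝ) (hq : 1 ≤ q) (hpq : q ≤ p)
    (ψ : S → T) (hψ : Measurable ψ)
    (habs : Measure.map ψ ν ≪ μ)
    (J : T → ℝ≥0∞) (hJ : J = (Measure.map ψ ν).rnDeriv μ)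
    (hfin : lKappaNorm μ p q (fun t => J t ^ (1 / q)) ≠ ⊤) :
    ∀ f : T → ℝ, Measurable f →
      eLpNorm (fun s => f (ψ s)) (ENNReal.ofReal q) ν ≤
        lKappaNorm μ p q (fun t => J t ^ (1 / q)) * eLpNorm f (ENNReal.ofReal p) μ :=
  composition_operator_bounded_of_memLkappa_general μ ν p q hq hpq ψ hψ habs J hJ
end

section
/- Let (T, μ), (S, ν) be σ-finite measure spaces, p = q ∈ [1,∞), and ψ : S → T measurable with ν ∘ ψ⁻¹ ≪ μ and J = d(ν∘ψ⁻¹)/dμ. Then the composition operator C_ψ f = f ∘ ψ is bounded from L^p(T, μ) to L^p(S, ν) if and only if J ∈ L^∞(T, μ), and in that case ‖C_ψ‖ = ‖J‖_{L^∞}^{1/p}. -/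
/-! Pulling back along `ψ` turns the `L^p(ν)`-norm of `f ∘ ψ` into the `L^p`-norm of `f` for the
measure `ν ∘ ψ⁻¹ = J • μ`. Since `J • μ ≤ (ess sup J) • μ`, the operator norm is at most
`‖J‖_∞^{1/p}`. Conversely, testing the bound on indicators of sets `A` of finite measure gives
`∫_A J dμ ≤ K^p μ(A)`, and by σ-finiteness this forces `J ≤ K^p` almost everywhere. -/

open MeasureTheory ENNReal

namespace MeasureTheory

variable {α : Type*} [MeasurableSpace α] {μ : Measure α}

theorem withDensity_le_essSup_smul (μ : Measure α) (f : α → ℝ≥0∞) :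
    μ.withDensity f ≤ essSup f μ • μ := by
  refine Measure.le_iff.2 fun s hs => ?_
  calc μ.withDensity f s = ∫⁻ a in s, f a ∂μ := withDensity_apply f hs
    _ ≤ ∫⁻ _ in s, essSup f μ ∂μ := lintegral_mono_ae (ae_restrict_of_ae (ae_le_essSup f))
    _ = (essSup f μ • μ) s := by rw [setLIntegral_const, Measure.smul_apply, smul_eq_mul]

theorem essSup_le_of_forall_withDensity_apply_le [SigmaFinite μ] {f : α → ℝ≥0∞}
    (hf : Measurable f) {c : ℝ≥0∞}
    (h : ∀ s, MeasurableSet s → μ s < ∞ → μ.withDensity f s ≤ c * μ s) :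
    essSup f μ ≤ c := by
  refine essSup_le_of_ae_le c <|
    ae_le_of_forall_setLIntegral_le_of_sigmaFinite hf fun s hs hμs => ?_
  rw [← withDensity_apply f hs, setLIntegral_const]
  exact h s hs hμs

theorem eLpNorm_withDensity_le_essSup_rpow_mul {E : Type*} [NormedAddCommGroup E]
    {p : ℝ≥0∞} (hp : p ≠ ∞) (J : α → ℝ≥0∞) (f : α → E) :
    eLpNorm f p (μ.withDensity J) ≤ essSup J μ ^ (1 / p.toReal) * eLpNorm f p μ := by
  calc eLpNorm f p (μ.withDensity J) ≤ eLpNorm f p (essSup J μ • μ) :=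
        eLpNorm_mono_measure f (withDensity_le_essSup_smul μ J)
    _ = essSup J μ ^ (1 / p.toReal) * eLpNorm f p μ := by
        rw [eLpNorm_smul_measure_of_ne_top hp, one_div, toReal_inv, smul_eq_mul, one_div]

theorem essSup_le_rpow_of_forall_eLpNorm_withDensity_le [SigmaFinite μ] {J : α → ℝ≥0∞}
    (hJ : Measurable J) {p : ℝ≥0∞} (hp0 : p ≠ 0) (hp : p ≠ ∞) {K : ℝ≥0∞}
    (hK : ∀ f : α → ℝ, Measurable f → eLpNorm f p (μ.withDensity J) ≤ K * eLpNorm f p μ) :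
    essSup J μ ≤ K ^ p.toReal := by
  have hp_pos : 0 < p.toReal := toReal_pos hp0 hp
  refine essSup_le_of_forall_withDensity_apply_le hJ fun s hs _ => ?_
  have hs_bound := hK (s.indicator fun _ => 1) (measurable_const.indicator hs)
  rw [eLpNorm_indicator_const hs hp0 hp, eLpNorm_indicator_const hs hp0 hp, enorm_one,
    one_mul, one_mul, one_div] at hs_bound
  rwa [← rpow_le_rpow_iff (inv_pos.2 hp_pos), mul_rpow_of_nonneg _ _ (inv_nonneg.2 hp_pos.le),
    rpow_rpow_inv hp_pos.ne']

theorem eLpNorm_comp_eq_eLpNorm_withDensity_rnDeriv {S T E : Type*} [MeasurableSpace S]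
    [MeasurableSpace T] [NormedAddCommGroup E] {ν : Measure S} {μ : Measure T} [SFinite ν]
    [SigmaFinite μ] {ψ : S → T} (hψ : Measurable ψ) (habs : ν.map ψ ≪ μ) {f : T → E}
    (hf : AEStronglyMeasurable f (ν.map ψ)) (p : ℝ≥0∞) :
    eLpNorm (fun s => f (ψ s)) p ν = eLpNorm f p (μ.withDensity ((ν.map ψ).rnDeriv μ)) := by
  rw [Measure.withDensity_rnDeriv_eq _ _ habs, eLpNorm_map_measure hf hψ.aemeasurable]
  rfl

end MeasureTheory

/-- For `p = q`, the composition operator `C_ψ f = f ∘ ψ` is bounded from `L^p(T,μ)` to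
`L^p(S,ν)` if and only if `J = d(ν∘ψ⁻¹)/dμ ∈ L^∞(T,μ)`, and in that case
`‖C_ψ‖ = ‖J‖_{L^∞}^{1/p}`. -/
theorem composition_operator_bounded_iff_rnDeriv_essBdd
    {T S : Type*} [MeasurableSpace T] [MeasurableSpace S]
    (μ : Measure T) (ν : Measure S) [SigmaFinite μ] [SigmaFinite ν]
    (p : ℝ) (hp : 1 ≤ p)
    (ψ : S → T) (hψ : Measurable ψ)
    (habs : Measure.map ψ ν ≪ μ)
    (J : T → ℝ≥0∞) (hJ : J = (Measure.map ψ ν).rnDeriv μ) :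
    ((∃ K : ℝ≥0∞, K ≠ ⊤ ∧ ∀ f : T → ℝ, Measurable f →
        eLpNorm (fun s => f (ψ s)) (ENNReal.ofReal p) ν ≤
          K * eLpNorm f (ENNReal.ofReal p) μ) ↔ essSup J μ ≠ ⊤)
    ∧ (∀ f : T → ℝ, Measurable f →
        eLpNorm (fun s => f (ψ s)) (ENNReal.ofReal p) ν ≤
          (essSup J μ) ^ (1 / p) * eLpNorm f (ENNReal.ofReal p) μ)
    ∧ (∀ K : ℝ≥0∞, (∀ f : T → ℝ, Measurable f →
        eLpNorm (fun s => f (ψ s)) (ENNReal.ofReal p) ν ≤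
          K * eLpNorm f (ENNReal.ofReal p) μ) → (essSup J μ) ^ (1 / p) ≤ K) := by
  have hp_pos : 0 < p := by linarith
  have hp_toReal : (ENNReal.ofReal p).toReal = p := toReal_ofReal hp_pos.le
  have hcomp (f : T → ℝ) (hf : Measurable f) : eLpNorm (fun s => f (ψ s)) (.ofReal p) ν =
      eLpNorm f (.ofReal p) (μ.withDensity J) :=
    hJ ▸ eLpNorm_comp_eq_eLpNorm_withDensity_rnDeriv hψ habs hf.aestronglyMeasurable _
  have upper (f : T → ℝ) (hf : Measurable f) : eLpNorm (fun s => f (ψ s)) (.ofReal p) ν ≤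
      essSup J μ ^ (1 / p) * eLpNorm f (.ofReal p) μ := by
    rw [hcomp f hf]
    simpa only [hp_toReal] using
      eLpNorm_withDensity_le_essSup_rpow_mul (μ := μ) (p := .ofReal p) ofReal_ne_top J f
  have lower (K : ℝ≥0∞) (hK : ∀ f : T → ℝ, Measurable f →
      eLpNorm (fun s => f (ψ s)) (.ofReal p) ν ≤ K * eLpNorm f (.ofReal p) μ) :
      essSup J μ ≤ K ^ p := by
    have hJK := essSup_le_rpow_of_forall_eLpNorm_withDensity_le
      (hJ ▸ Measure.measurable_rnDeriv _ _) (by simpa using hp_pos) ofReal_ne_top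
      fun f hf => hcomp f hf ▸ hK f hf
    rwa [hp_toReal] at hJK
  refine ⟨⟨fun ⟨K, hK_top, hK⟩ => ?_, fun h => ⟨_, rpow_ne_top_of_nonneg (by positivity) h, upper⟩⟩,
    upper, fun K hK => ?_⟩
  · exact ((lower K hK).trans_lt (rpow_lt_top_of_nonneg hp_pos.le hK_top)).ne
  · rw [one_div, rpow_inv_le_iff hp_pos]
    exact lower K hK
end

section
/- Let (T, μ), (S, ν) be σ-finite measure spaces, 1 ≤ q < p < ∞, κ = pq/(p−q), and ψ : S → T measurable with ν ∘ ψ⁻¹ ≪ μ and J = d(ν∘ψ⁻¹)/dμ. If the composition operator C_ψ f = f ∘ ψ is bounded from L^p(T, μ) to L^q(S, ν), then J^{1/q} ∈ L^κ(T, μ). -/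
/-!
Pushing forward along `ψ` turns `∫ g ∘ ψ dν` into `∫ g J dμ`, so testing the bound on
`f = g ^ (1/q)` shows that `g ↦ ∫ g J dμ` is bounded on `L^{p/q}(μ)` with norm at most `K^q`.
By the converse of Hölder's inequality, `J` then lies in the dual space `L^{p/(p-q)}(μ)`, and
`J^{p/(p-q)} = (J^{1/q})^κ`. The converse Hölder step is run on the truncations `min J n`
restricted to sets of finite measure, tested against `g = (min J n)^{p/(p-q) - 1}`, for which all
integrals are finite, and concluded by monotone convergence.
-/

open MeasureTheory ENNReal

namespace ENNReal

lemma le_rpow_of_le_mul_rpow_inv {s r : ℝ} (h : s.HolderConjugate r) {a C : ℝ≥0∞}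
    (ha : a ≠ ∞) (hle : a ≤ C * a ^ s⁻¹) : a ≤ C ^ r := by
  rcases eq_or_ne a 0 with rfl | ha0
  · exact zero_le
  have hroot : a ^ r⁻¹ ≤ C := by
    rw [← h.one_sub_inv, rpow_sub _ _ ha0 ha, rpow_one]
    exact ENNReal.div_le_of_le_mul hle
  calc a = (a ^ r⁻¹) ^ r := by rw [← rpow_mul, inv_mul_cancel₀ h.symm.ne_zero, rpow_one]
    _ ≤ C ^ r := rpow_le_rpow hroot h.symm.nonneg

lemma rpow_le_rpow_sub_one_mul {x y : ℝ≥0∞} {r : ℝ} (hr : 1 ≤ r) (hxy : x ≤ y) :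
    x ^ r ≤ x ^ (r - 1) * y :=
  calc x ^ r = x ^ (r - 1) * x ^ (1 : ℝ) := by
        rw [← rpow_add_of_nonneg _ _ (sub_nonneg.mpr hr) zero_le_one, sub_add_cancel]
    _ ≤ x ^ (r - 1) * y := by rw [rpow_one]; gcongr

lemma iSup_min_natCast_rpow (x : ℝ≥0∞) {r : ℝ} (hr : 0 < r) :
    ⨆ n : ℕ, min x n ^ r = x ^ r := by
  have hsup : ⨆ n : ℕ, min x n = x := by
    rw [← inf_iSup_eq, ENNReal.iSup_natCast, inf_top_eq]
  conv_rhs => rw [← hsup]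
  exact ((orderIsoRpow r hr).map_iSup _).symm

end ENNReal

section Duality

variable {T : Type*} [MeasurableSpace T] {μ : Measure T} {J : T → ℝ≥0∞} {s r : ℝ}
  {C : ℝ≥0∞}

lemma setLIntegral_min_natCast_rpow_le (hJ : Measurable J) (h : s.HolderConjugate r)
    (hC : ∀ g : T → ℝ≥0∞, Measurable g → (∀ t, g t ≠ ∞) →
      ∫⁻ t, g t * J t ∂μ ≤ C * (∫⁻ t, g t ^ s ∂μ) ^ s⁻¹)
    {A : Set T} (hA : MeasurableSet A) (hμA : μ A ≠ ∞) (n : ℕ) :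
    ∫⁻ t in A, min (J t) n ^ r ∂μ ≤ C ^ r := by
  set F : T → ℝ≥0∞ := fun t => min (J t) n
  have hr1 : 0 ≤ r - 1 := sub_nonneg.2 h.symm.lt.le
  have hF_ne_top : ∀ t, F t ≠ ∞ := fun t =>
    ne_top_of_le_ne_top (natCast_ne_top n) (min_le_right _ _)
  -- the function for which Hölder's inequality against `F` is an equality
  set g : T → ℝ≥0∞ := A.indicator fun t => F t ^ (r - 1)
  have hg : Measurable g := ((hJ.min measurable_const).pow_const _).indicator hA
  have hg_ne_top : ∀ t, g t ≠ ∞ := fun t =>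
    ne_top_of_le_ne_top (rpow_ne_top_of_nonneg hr1 (hF_ne_top t)) (Set.indicator_le_self _ _ t)
  have hgs : ∫⁻ t, g t ^ s ∂μ = ∫⁻ t in A, F t ^ r ∂μ := by
    rw [← lintegral_indicator hA]
    congr 1 with t
    by_cases ht : t ∈ A
    · simp only [g, Set.indicator_of_mem ht, ← rpow_mul, h.symm.sub_one_mul_conj]
    · simp only [g, Set.indicator_of_notMem ht, zero_rpow_of_pos h.pos]
  have hgJ : ∫⁻ t in A, F t ^ r ∂μ ≤ ∫⁻ t, g t * J t ∂μ :=
    calc ∫⁻ t in A, F t ^ r ∂μ ≤ ∫⁻ t in A, F t ^ (r - 1) * J t ∂μ :=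
          lintegral_mono fun t => rpow_le_rpow_sub_one_mul h.symm.lt.le (min_le_left _ _)
      _ = ∫⁻ t, g t * J t ∂μ := by
          rw [← lintegral_indicator hA]; simp_rw [g, Set.indicator_mul_left]
  have hI_ne_top : ∫⁻ t in A, F t ^ r ∂μ ≠ ∞ := by
    refine ne_top_of_le_ne_top
      (mul_ne_top (rpow_ne_top_of_nonneg h.symm.nonneg (natCast_ne_top n)) hμA) ?_
    calc ∫⁻ t in A, F t ^ r ∂μ ≤ ∫⁻ _ in A, (n : ℝ≥0∞) ^ r ∂μ :=
          lintegral_mono fun t => rpow_le_rpow (min_le_right _ _) h.symm.nonneg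
      _ = (n : ℝ≥0∞) ^ r * μ A := setLIntegral_const _ _
  exact le_rpow_of_le_mul_rpow_inv h hI_ne_top (hgJ.trans (hgs ▸ hC g hg hg_ne_top))

theorem lintegral_rpow_le_of_forall_lintegral_mul_le [SigmaFinite μ] (hJ : Measurable J)
    (h : s.HolderConjugate r)
    (hC : ∀ g : T → ℝ≥0∞, Measurable g → (∀ t, g t ≠ ∞) →
      ∫⁻ t, g t * J t ∂μ ≤ C * (∫⁻ t, g t ^ s ∂μ) ^ s⁻¹) :
    ∫⁻ t, J t ^ r ∂μ ≤ C ^ r :=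
  calc ∫⁻ t, J t ^ r ∂μ = ∫⁻ t, ⨆ n : ℕ, min (J t) n ^ r ∂μ := by
        simp_rw [iSup_min_natCast_rpow _ h.symm.pos]
    _ = ⨆ n : ℕ, ∫⁻ t, min (J t) n ^ r ∂μ :=
        lintegral_iSup (fun n => (hJ.min measurable_const).pow_const r)
          fun m n hmn t => by dsimp only; gcongr; exact h.symm.nonneg
    _ ≤ C ^ r := iSup_le fun n => lintegral_le_of_forall_fin_meas_le _ fun A hA hμA =>
        setLIntegral_min_natCast_rpow_le hJ h hC hA hμA n

end Duality

section CompositionOperator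

variable {T S : Type*} [MeasurableSpace T] [MeasurableSpace S] {μ : Measure T} {ν : Measure S}
  [SigmaFinite μ] [SFinite ν] {ψ : S → T}

theorem lintegral_comp_eq_lintegral_mul_rnDeriv (hψ : Measurable ψ) (habs : ν.map ψ ≪ μ)
    {g : T → ℝ≥0∞} (hg : Measurable g) :
    ∫⁻ s, g (ψ s) ∂ν = ∫⁻ t, g t * (ν.map ψ).rnDeriv μ t ∂μ := by
  simp_rw [← lintegral_map hg hψ, mul_comm (g _), lintegral_rnDeriv_mul habs hg.aemeasurable]

theorem lintegral_mul_rnDeriv_le_of_eLpNorm_comp_le (hψ : Measurable ψ) (habs : ν.map ψ ≪ μ)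
    {p q : ℝ} (hp : 0 < p) (hq : 0 < q) {K : ℝ≥0∞}
    (hbdd : ∀ f : T → ℝ, Measurable f →
      eLpNorm (fun s => f (ψ s)) (ENNReal.ofReal q) ν ≤ K * eLpNorm f (ENNReal.ofReal p) μ)
    {g : T → ℝ≥0∞} (hg : Measurable g) (hg_ne_top : ∀ t, g t ≠ ∞) :
    ∫⁻ t, g t * (ν.map ψ).rnDeriv μ t ∂μ ≤
      K ^ q * (∫⁻ t, g t ^ (p / q) ∂μ) ^ (p / q)⁻¹ := by
  set f : T → ℝ := fun t => (g t ^ q⁻¹).toReal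
  have hf_enorm : ∀ t, ‖f t‖ₑ = g t ^ q⁻¹ := fun t =>
    Real.enorm_toReal (rpow_ne_top_of_nonneg (inv_nonneg.2 hq.le) (hg_ne_top t))
  have key := hbdd f (hg.pow_const _).ennreal_toReal
  rw [eLpNorm_eq_lintegral_rpow_enorm_toReal (by simpa using hq) ofReal_ne_top,
    eLpNorm_eq_lintegral_rpow_enorm_toReal (by simpa using hp) ofReal_ne_top,
    toReal_ofReal hq.le, toReal_ofReal hp.le] at key
  simp_rw [hf_enorm, ← rpow_mul, inv_mul_cancel₀ hq.ne', rpow_one] at key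
  rw [← lintegral_comp_eq_lintegral_mul_rnDeriv hψ habs hg]
  calc ∫⁻ s, g (ψ s) ∂ν = ((∫⁻ s, g (ψ s) ∂ν) ^ (1 / q)) ^ q := by
        rw [← rpow_mul, one_div_mul_cancel hq.ne', rpow_one]
    _ ≤ (K * (∫⁻ t, g t ^ (q⁻¹ * p) ∂μ) ^ (1 / p)) ^ q := rpow_le_rpow key hq.le
    _ = K ^ q * (∫⁻ t, g t ^ (p / q) ∂μ) ^ (p / q)⁻¹ := by
        rw [mul_rpow_of_nonneg _ _ hq.le, ← rpow_mul, inv_mul_eq_div]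
        congr 2
        field_simp

end CompositionOperator

/-- Necessity for `p > q`: if the composition operator `C_ψ f = f ∘ ψ` is bounded from
`L^p(T,μ)` to `L^q(S,ν)` then `J^{1/q} ∈ L^κ(T,μ)`, `κ = pq/(p-q)`,
where `J = d(ν∘ψ⁻¹)/dμ`. -/
theorem rnDeriv_memLkappa_of_composition_operator_bounded
    {T S : Type*} [MeasurableSpace T] [MeasurableSpace S]
    (μ : Measure T) (ν : Measure S) [SigmaFinite μ] [SigmaFinite ν]
    (p q κ : ℝ) (hq : 1 ≤ q) (hpq : q < p) (hκ : κ = p * q / (p - q))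
    (ψ : S → T) (hψ : Measurable ψ)
    (habs : Measure.map ψ ν ≪ μ)
    (J : T → ℝ≥0∞) (hJ : J = (Measure.map ψ ν).rnDeriv μ)
    (K : ℝ≥0∞) (hK : K ≠ ⊤)
    (hbdd : ∀ f : T → ℝ, Measurable f →
      eLpNorm (fun s => f (ψ s)) (ENNReal.ofReal q) ν ≤
        K * eLpNorm f (ENNReal.ofReal p) μ) :
    ∫⁻ t, (J t ^ (1 / q)) ^ κ ∂μ ≠ ⊤ := by
  have hq0 : 0 < q := by linarith
  have hp0 : 0 < p := by linarith
  have hconj : (p / q).HolderConjugate (p / (p - q)) := by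
    rw [Real.holderConjugate_iff]
    refine ⟨(one_lt_div hq0).2 hpq, ?_⟩
    field_simp [(sub_pos.2 hpq).ne']
    ring
  have hexp : 1 / q * κ = p / (p - q) := by
    rw [hκ]
    field_simp
  have hJ_le : ∫⁻ t, J t ^ (p / (p - q)) ∂μ ≤ (K ^ q) ^ (p / (p - q)) := by
    subst hJ
    exact lintegral_rpow_le_of_forall_lintegral_mul_le (Measure.measurable_rnDeriv _ _) hconj
      fun _ hg hg_ne_top =>
        lintegral_mul_rnDeriv_le_of_eLpNorm_comp_le hψ habs hp0 hq0 hbdd hg hg_ne_top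
  simp_rw [← rpow_mul, hexp]
  exact ne_top_of_le_ne_top
    (rpow_ne_top_of_nonneg hconj.symm.nonneg (rpow_ne_top_of_nonneg hq0.le hK)) hJ_le
end

section
/- Let (S, ν), (X, η), (Y, η') be σ-finite measure spaces, Ω ⊆ S × X and Ω' ⊆ S × Y measurable, 1 ≤ α ≤ β < ∞, 1 ≤ q ≤ p < ∞. Suppose u : Ω → Y satisfies: for ν-a.e. s, the map u(s,·) : Ω_s → Ω'_s is measurable, the pushforward of η under u(s,·) restricted to Ω_s is absolutely continuous with respect to η' with density J_u(s, ·), and the identity map on S is used in the first coordinate (i.e., φ(s,x) = (s, u(s,x))). If the function (s,y) ↦ J_u(s,y)^{1/α} belongs to the mixed norm space L^{κ, βα/(β−α)}(Ω') in the variables (s, y) (with κ = pq/(p−q), and with the convention of L^∞ norms when exponents coincide), then the composition operator C_φ f = f ∘ φ is bounded from L^{p,β}(Ω') to L^{q,α}(Ω). -/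
open MeasureTheory ENNReal

/-- `L^e` "norm" of an `ℝ≥0∞`-valued function, with the essential supremum when `e = ∞`. -/
noncomputable def eNormExp {Z : Type*} [MeasurableSpace Z] (e : ℝ≥0∞) (m : Measure Z)
    (g : Z → ℝ≥0∞) : ℝ≥0∞ :=
  if e = ⊤ then essSup g m else (∫⁻ z, g z ^ e.toReal ∂m) ^ (1 / e.toReal)

/-- The mixed norm over `Ω' ⊆ S × Y` with (possibly infinite) exponents `Q` (outer) and
`A` (inner, over the slices `Ω'_s`) of an `ℝ≥0∞`-valued function. -/
noncomputable def mixedNormE {S Y : Type*} [MeasurableSpace S] [MeasurableSpace Y]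
    (ν : Measure S) (η' : Measure Y) (Ω' : Set (S × Y)) (Q A : ℝ≥0∞)
    (g : S × Y → ℝ≥0∞) : ℝ≥0∞ :=
  eNormExp Q ν (fun s => eNormExp A (η'.restrict {y | (s, y) ∈ Ω'}) (fun y => g (s, y)))

/-- The mixed norm `‖f‖_{q,α}` of a real-valued `f` over `Ω ⊆ S × X`. -/
noncomputable def mixedNorm {S X : Type*} [MeasurableSpace S] [MeasurableSpace X]
    (ν : Measure S) (η : Measure X) (Ω : Set (S × X)) (q α : ℝ)
    (f : S × X → ℝ) : ℝ≥0∞ :=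
  (∫⁻ s, (∫⁻ x in {x | (s, x) ∈ Ω}, ENNReal.ofReal |f (s, x)| ^ α ∂η) ^ (q / α) ∂ν)
    ^ (1 / q)

/-! For a.e. `s`, the change of variables `y = u(s,x)` turns the inner `L^α(Ω_s)` norm of
`f ∘ φ` into the `L^α(Ω'_s)` norm of `f(s,·) J_u(s,·)^{1/α}`, which Hölder's inequality with
`1/α = 1/β + 1/A` bounds by `‖f(s,·)‖_β ‖J_u(s,·)^{1/α}‖_A`. Hölder's inequality in `s` with
`1/q = 1/p + 1/Q` then gives `‖f ∘ φ‖_{q,α} ≤ ‖J_u^{1/α}‖_{Q,A} ‖f‖_{p,β}`. -/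

/-- The exponent `r` with `1/a = 1/b + 1/r`. -/
noncomputable def holderGapExponent (b a : ℝ) : ℝ≥0∞ :=
  if b = a then ⊤ else ENNReal.ofReal (b * a / (b - a))

section Holder

variable {Z : Type*} [MeasurableSpace Z] (μ : Measure Z)

lemma eNormExp_top (g : Z → ℝ≥0∞) : eNormExp ⊤ μ g = essSup g μ := if_pos rfl

lemma eNormExp_of_ne_top {e : ℝ≥0∞} (he : e ≠ ⊤) (g : Z → ℝ≥0∞) :
    eNormExp e μ g = (∫⁻ z, g z ^ e.toReal ∂μ) ^ (1 / e.toReal) := if_neg he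

lemma essSup_le_iff_measure_lt_eq_zero {g : Z → ℝ≥0∞} {c : ℝ≥0∞} :
    essSup g μ ≤ c ↔ μ {z | c < g z} = 0 := by
  simp only [← not_le, ← ae_iff]
  exact ⟨fun h => (ENNReal.ae_le_essSup g).mono fun z hz => hz.trans h, essSup_le_of_ae_le c⟩

lemma lintegral_mul_rpow_le_mul_essSup {a : ℝ} (ha : 0 < a) {F : Z → ℝ≥0∞}
    (hF : AEMeasurable F μ) (N : Z → ℝ≥0∞) :
    (∫⁻ z, (F z * N z) ^ a ∂μ) ^ (1 / a) ≤ (∫⁻ z, F z ^ a ∂μ) ^ (1 / a) * essSup N μ := by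
  calc (∫⁻ z, (F z * N z) ^ a ∂μ) ^ (1 / a)
      ≤ (∫⁻ z, F z ^ a * essSup N μ ^ a ∂μ) ^ (1 / a) := by
        gcongr ?_ ^ _
        refine lintegral_mono_ae ?_
        filter_upwards [ENNReal.ae_le_essSup N] with z hz
        rw [← ENNReal.mul_rpow_of_nonneg _ _ ha.le]
        gcongr
    _ = (∫⁻ z, F z ^ a ∂μ) ^ (1 / a) * essSup N μ := by
        rw [lintegral_mul_const'' _ (hF.pow_const a),
          ENNReal.mul_rpow_of_nonneg _ _ (by positivity), ← ENNReal.rpow_mul,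
          mul_one_div_cancel ha.ne', ENNReal.rpow_one]

lemma lintegral_mul_rpow_le_mul_eNormExp {a b : ℝ} (ha : 0 < a) (hab : a ≤ b)
    {F N : Z → ℝ≥0∞} (hF : AEMeasurable F μ) (hN : AEMeasurable N μ) :
    (∫⁻ z, (F z * N z) ^ a ∂μ) ^ (1 / a) ≤
      (∫⁻ z, F z ^ b ∂μ) ^ (1 / b) * eNormExp (holderGapExponent b a) μ N := by
  rcases hab.eq_or_lt with rfl | hlt
  · rw [holderGapExponent, if_pos rfl, eNormExp_top]
    exact lintegral_mul_rpow_le_mul_essSup μ ha hF N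
  · have hr : 0 < b * a / (b - a) := div_pos (by nlinarith) (by linarith)
    rw [holderGapExponent, if_neg hlt.ne', eNormExp_of_ne_top μ ofReal_ne_top,
      toReal_ofReal hr.le]
    refine ENNReal.lintegral_Lp_mul_le_Lq_mul_Lr ha hlt ?_ μ hF hN
    have hb : b ≠ 0 := by linarith
    field_simp
    ring

end Holder

section Slices

variable {S Y : Type*} [MeasurableSpace S] [MeasurableSpace Y]
  (η' : Measure Y) [SFinite η'] {Ω' : Set (S × Y)} (hΩ' : MeasurableSet Ω')
  {w : S × Y → ℝ≥0∞} (hw : Measurable w)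

include hΩ' hw

lemma measurable_lintegral_slice :
    Measurable fun s => ∫⁻ y in {y | (s, y) ∈ Ω'}, w (s, y) ∂η' := by
  have h : ∀ s, ∫⁻ y in {y | (s, y) ∈ Ω'}, w (s, y) ∂η' = ∫⁻ y, Ω'.indicator w (s, y) ∂η' :=
    fun s => (lintegral_indicator (measurable_prodMk_left hΩ') _).symm
  simp_rw [h]
  exact (hw.indicator hΩ').lintegral_prod_right'

lemma measurable_essSup_slice :
    Measurable fun s => essSup (fun y => w (s, y)) (η'.restrict {y | (s, y) ∈ Ω'}) := by
  have hrestrict : ∀ s t, η'.restrict {y | (s, y) ∈ Ω'} t = η' (t ∩ {y | (s, y) ∈ Ω'}) :=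
    fun _ _ => Measure.restrict_apply' (measurable_prodMk_left hΩ')
  refine measurable_of_Iic fun c => ?_
  simp only [Set.preimage, Set.mem_Iic, essSup_le_iff_measure_lt_eq_zero, hrestrict]
  exact measurable_measure_prodMk_left ((measurableSet_lt measurable_const hw).inter hΩ')
    (measurableSet_singleton 0)

lemma measurable_eNormExp_slice (e : ℝ≥0∞) :
    Measurable fun s => eNormExp e (η'.restrict {y | (s, y) ∈ Ω'}) (fun y => w (s, y)) := by
  by_cases he : e = ⊤
  · simp only [he, eNormExp_top]
    exact measurable_essSup_slice η' hΩ' hw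
  · simp only [eNormExp_of_ne_top _ he]
    exact (measurable_lintegral_slice η' hΩ' (hw.pow_const _)).pow_const _

end Slices

lemma lintegral_comp_rpow_le_of_map_eq_withDensity {X Y : Type*} [MeasurableSpace X]
    [MeasurableSpace Y] {μ : Measure X} {ν : Measure Y} {v : X → Y} (hv : Measurable v)
    {J : Y → ℝ≥0∞} (hJ : Measurable J) (hmap : μ.map v = ν.withDensity J)
    {a b : ℝ} (ha : 0 < a) (hab : a ≤ b) {g : Y → ℝ≥0∞} (hg : Measurable g) :
    (∫⁻ x, g (v x) ^ a ∂μ) ^ (1 / a) ≤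
      (∫⁻ y, g y ^ b ∂ν) ^ (1 / b) *
        eNormExp (holderGapExponent b a) ν (fun y => J y ^ (1 / a)) := by
  have hchange : ∫⁻ x, g (v x) ^ a ∂μ = ∫⁻ y, (g y * J y ^ (1 / a)) ^ a ∂ν := by
    rw [← lintegral_map (hg.pow_const a) hv, hmap,
      lintegral_withDensity_eq_lintegral_mul _ hJ (hg.pow_const a)]
    refine lintegral_congr fun y => ?_
    rw [Pi.mul_apply, ENNReal.mul_rpow_of_nonneg _ _ ha.le, ← ENNReal.rpow_mul,
      one_div_mul_cancel ha.ne', ENNReal.rpow_one, mul_comm]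
  rw [hchange]
  exact lintegral_mul_rpow_le_mul_eNormExp ν ha hab hg.aemeasurable
    (hJ.pow_const _).aemeasurable

lemma mixedNorm_eq_lintegral_rpow {S X : Type*} [MeasurableSpace S] [MeasurableSpace X]
    (ν : Measure S) (η : Measure X) (Ω : Set (S × X)) (q α : ℝ)
    (f : S × X → ℝ) :
    mixedNorm ν η Ω q α f = (∫⁻ s, ((∫⁻ x in {x | (s, x) ∈ Ω},
      ENNReal.ofReal |f (s, x)| ^ α ∂η) ^ (1 / α)) ^ q ∂ν) ^ (1 / q) := by
  simp only [mixedNorm, ← ENNReal.rpow_mul, one_div_mul_eq_div]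

theorem composition_mixed_norm_bounded_general
    {S X Y : Type*} [MeasurableSpace S] [MeasurableSpace X] [MeasurableSpace Y]
    (ν : Measure S) (η : Measure X) (η' : Measure Y)
    [SigmaFinite η']
    (Ω : Set (S × X))
    (Ω' : Set (S × Y)) (hΩ' : MeasurableSet Ω')
    (p q α β : ℝ) (hα : 1 ≤ α) (hαβ : α ≤ β) (hq : 1 ≤ q) (hqp : q ≤ p)
    (u : S × X → Y) (hu : Measurable u)
    (Ju : S × Y → ℝ≥0∞) (hJu : Measurable Ju)
    (hpush : ∀ᵐ s ∂ν,
      Measure.map (fun x => u (s, x)) (η.restrict {x | (s, x) ∈ Ω}) =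
        (η'.restrict {y | (s, y) ∈ Ω'}).withDensity (fun y => Ju (s, y)))
    (hfin : mixedNormE ν η' Ω'
        (if p = q then ⊤ else ENNReal.ofReal (p * q / (p - q)))
        (if β = α then ⊤ else ENNReal.ofReal (β * α / (β - α)))
        (fun x => Ju x ^ (1 / α)) ≠ ⊤) :
    ∃ K : ℝ≥0∞, K ≠ ⊤ ∧ ∀ f : S × Y → ℝ, Measurable f →
      mixedNorm ν η Ω q α (fun x => f (x.1, u x)) ≤
        K * mixedNorm ν η' Ω' p β f := by
  set N : S → ℝ≥0∞ := fun s => eNormExp (holderGapExponent β α)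
    (η'.restrict {y | (s, y) ∈ Ω'}) (fun y => Ju (s, y) ^ (1 / α))
  refine ⟨eNormExp (holderGapExponent p q) ν N, hfin, fun f hf => ?_⟩
  have hg : Measurable fun z : S × Y => ENNReal.ofReal |f z| := by fun_prop
  set F : S → ℝ≥0∞ := fun s =>
    (∫⁻ y in {y | (s, y) ∈ Ω'}, ENNReal.ofReal |f (s, y)| ^ β ∂η') ^ (1 / β)
  have hslice : ∀ᵐ s ∂ν, (∫⁻ x in {x | (s, x) ∈ Ω},
      ENNReal.ofReal |f (s, u (s, x))| ^ α ∂η) ^ (1 / α) ≤ F s * N s := by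
    filter_upwards [hpush] with s hs
    exact lintegral_comp_rpow_le_of_map_eq_withDensity (hu.comp measurable_prodMk_left)
      (hJu.comp measurable_prodMk_left) hs (by linarith) hαβ (hg.comp measurable_prodMk_left)
  rw [mixedNorm_eq_lintegral_rpow, mixedNorm_eq_lintegral_rpow, mul_comm]
  calc _ ≤ (∫⁻ s, (F s * N s) ^ q ∂ν) ^ (1 / q) := by
        gcongr ?_ ^ _
        exact lintegral_mono_ae (hslice.mono fun s hs => by gcongr)
    _ ≤ _ := lintegral_mul_rpow_le_mul_eNormExp ν (by linarith) hqp
        ((measurable_lintegral_slice η' hΩ' (hg.pow_const β)).pow_const _).aemeasurable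
        (measurable_eNormExp_slice η' hΩ' (hJu.pow_const _) _).aemeasurable

/-- Sufficiency for the composition operator on mixed norm spaces induced by
`φ(s,x) = (s, u(s,x))`: if `(s,y) ↦ J_u(s,y)^{1/α}` lies in `L^{κ, βα/(β-α)}(Ω')`
(`κ = pq/(p-q)`, with `L^∞` conventions for coinciding exponents), then
`C_φ : L^{p,β}(Ω') → L^{q,α}(Ω)` is bounded. -/
theorem composition_mixed_norm_bounded
    {S X Y : Type*} [MeasurableSpace S] [MeasurableSpace X] [MeasurableSpace Y]
    (ν : Measure S) (η : Measure X) (η' : Measure Y)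
    [SigmaFinite ν] [SigmaFinite η] [SigmaFinite η']
    (Ω : Set (S × X)) (hΩ : MeasurableSet Ω)
    (Ω' : Set (S × Y)) (hΩ' : MeasurableSet Ω')
    (p q α β : ℝ) (hα : 1 ≤ α) (hαβ : α ≤ β) (hq : 1 ≤ q) (hqp : q ≤ p)
    (u : S × X → Y) (hu : Measurable u)
    (Ju : S × Y → ℝ≥0∞) (hJu : Measurable Ju)
    (hpush : ∀ᵐ s ∂ν,
      Measure.map (fun x => u (s, x)) (η.restrict {x | (s, x) ∈ Ω}) =
        (η'.restrict {y | (s, y) ∈ Ω'}).withDensity (fun y => Ju (s, y)))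
    (hfin : mixedNormE ν η' Ω'
        (if p = q then ⊤ else ENNReal.ofReal (p * q / (p - q)))
        (if β = α then ⊤ else ENNReal.ofReal (β * α / (β - α)))
        (fun x => Ju x ^ (1 / α)) ≠ ⊤) :
    ∃ K : ℝ≥0∞, K ≠ ⊤ ∧ ∀ f : S × Y → ℝ, Measurable f →
      mixedNorm ν η Ω q α (fun x => f (x.1, u x)) ≤
        K * mixedNorm ν η' Ω' p β f :=
  composition_mixed_norm_bounded_general ν η η' Ω Ω' hΩ' p q α β hα hαβ hq hqp u hu Ju hJu hpush
    hfin
end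

section
/- Let (T, μ), (S, ν) be σ-finite measure spaces, 1 ≤ q < p < ∞, κ = pq/(p−q), F ⊆ S × T measurable, λ ≪ ν × μ with density J, and P : F → ℝ measurable. If the operator M_F[f](s,t) = P(s,t) f(t) is bounded from L^p(T, μ) to L^q(F, λ), then the function t ↦ ( ∫_{F_t} |P(s,t)|^q J(s,t) dν(s) )^{1/q} belongs to L^κ(T, μ). -/
/-!
Fubini turns boundedness of `M_F` into boundedness of multiplication by
`w t = (∫_{F_t} |P|^q J dν)^{1/q}` from `L^p(μ)` to `L^q(μ)`. Testing that operator on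
`f = w^{κ/p}`, for which `(f w)^q = f^p = w^κ`, gives `A^{1/q} ≤ K A^{1/p}` with `A = ∫ w^κ`;
since `1/q - 1/p = 1/κ` this is `A ≤ K^κ` once `A < ∞`. Truncating `w` in height and to the
spanning sets of `μ` makes `A` finite, and monotone convergence removes the truncation.
-/

open MeasureTheory ENNReal

lemma div_eq_div_add_one_of_eq_mul_div_sub {p q κ : ℝ} (hq : 0 < q) (hpq : q < p)
    (hκ : κ = p * q / (p - q)) : κ / q = κ / p + 1 := by
  have : p - q ≠ 0 := (sub_pos.2 hpq).ne'
  have : p ≠ 0 := (hq.trans hpq).ne'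
  subst hκ
  field_simp
  ring

lemma mul_div_sub_pos {p q : ℝ} (hq : 0 < q) (hpq : q < p) : 0 < p * q / (p - q) :=
  div_pos (_root_.mul_pos (hq.trans hpq) hq) (sub_pos.2 hpq)

lemma ENNReal.le_rpow_of_rpow_le_mul_rpow {a K : ℝ≥0∞} (ha : a ≠ ⊤) {p q κ : ℝ}
    (hq : 0 < q) (hpq : q < p) (hκ : κ = p * q / (p - q)) (h : a ^ (1 / q) ≤ K * a ^ (1 / p)) :
    a ≤ K ^ κ := by
  rcases eq_or_ne a 0 with rfl | ha0
  · exact zero_le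
  have hκ0 : 0 < κ := hκ ▸ mul_div_sub_pos hq hpq
  have hpow : a ^ (κ / q) ≤ K ^ κ * a ^ (κ / p) := by
    simpa only [mul_rpow_of_nonneg _ _ hκ0.le, ← rpow_mul, one_div_mul_eq_div]
      using rpow_le_rpow h hκ0.le
  rw [div_eq_div_add_one_of_eq_mul_div_sub hq hpq hκ, rpow_add _ _ ha0 ha, rpow_one,
    mul_comm] at hpow
  exact (ENNReal.mul_le_mul_iff_left (rpow_pos (pos_iff_ne_zero.2 ha0) ha).ne'
    (rpow_ne_top_of_nonneg (div_pos hκ0 (hq.trans hpq)).le ha)).1 hpow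

section MultiplicationOperator

variable {T : Type*} [MeasurableSpace T] {μ : Measure T} {w : T → ℝ≥0∞}

lemma lintegral_rpow_le_of_mul_bound_of_ne_top {p q κ : ℝ} (hq : 0 < q) (hpq : q < p)
    (hκ : κ = p * q / (p - q)) (hw : Measurable w) (hw_top : ∀ t, w t ≠ ⊤)
    (hA : ∫⁻ t, w t ^ κ ∂μ ≠ ⊤) {K : ℝ≥0∞}
    (hmul : ∀ f : T → ℝ≥0∞, Measurable f → (∀ t, f t ≠ ⊤) →
      (∫⁻ t, (f t * w t) ^ q ∂μ) ^ (1 / q) ≤ K * (∫⁻ t, f t ^ p ∂μ) ^ (1 / p)) :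
    ∫⁻ t, w t ^ κ ∂μ ≤ K ^ κ := by
  have hp : 0 < p := hq.trans hpq
  have hκp : 0 ≤ κ / p := (div_pos (hκ ▸ mul_div_sub_pos hq hpq) hp).le
  have htest := hmul (fun t => w t ^ (κ / p)) (hw.pow_const _)
    fun t => rpow_ne_top_of_nonneg hκp (hw_top t)
  have hmul_pow : ∀ t, (w t ^ (κ / p) * w t) ^ q = w t ^ κ := fun t => by
    have hadd := rpow_add_of_nonneg (x := w t) (κ / p) 1 hκp zero_le_one
    rw [rpow_one] at hadd
    rw [← hadd, ← rpow_mul,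
      ← div_eq_div_add_one_of_eq_mul_div_sub hq hpq hκ, div_mul_cancel₀ _ hq.ne']
  have hpow_pow : ∀ t, (w t ^ (κ / p)) ^ p = w t ^ κ := fun t => by
    rw [← rpow_mul, div_mul_cancel₀ _ hp.ne']
  simp only [hmul_pow, hpow_pow] at htest
  exact le_rpow_of_rpow_le_mul_rpow hA hq hpq hκ htest

noncomputable def spanningTruncation (μ : Measure T) [SigmaFinite μ] (w : T → ℝ≥0∞) (n : ℕ) :
    T → ℝ≥0∞ :=
  (spanningSets μ n).indicator fun t => min (w t) n

variable [SigmaFinite μ]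

lemma measurable_spanningTruncation (hw : Measurable w) (n : ℕ) :
    Measurable (spanningTruncation μ w n) :=
  (hw.min measurable_const).indicator (measurableSet_spanningSets μ n)

lemma spanningTruncation_le_self (n : ℕ) (t : T) : spanningTruncation μ w n t ≤ w t :=
  Set.indicator_apply_le fun _ => min_le_left _ _

lemma spanningTruncation_le_natCast (n : ℕ) (t : T) : spanningTruncation μ w n t ≤ n :=
  Set.indicator_apply_le (g := fun _ => (n : ℝ≥0∞)) fun _ => min_le_right _ _

lemma spanningTruncation_ne_top (n : ℕ) (t : T) : spanningTruncation μ w n t ≠ ⊤ :=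
  ((spanningTruncation_le_natCast n t).trans_lt (natCast_lt_top n)).ne

lemma monotone_spanningTruncation : Monotone (spanningTruncation μ w) := by
  intro m n hmn t
  unfold spanningTruncation
  by_cases ht : t ∈ spanningSets μ m
  · rw [Set.indicator_of_mem ht, Set.indicator_of_mem (monotone_spanningSets μ hmn ht)]
    exact min_le_min le_rfl (by exact_mod_cast hmn)
  · simp [ht]

lemma iSup_spanningTruncation (t : T) : ⨆ n, spanningTruncation μ w n t = w t := by
  refine le_antisymm (iSup_le fun n => spanningTruncation_le_self n t) ?_
  obtain ⟨N, hN⟩ := Set.mem_iUnion.1 (iUnion_spanningSets μ ▸ Set.mem_univ t)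
  calc w t = ⨆ n : ℕ, min (w t) n := by rw [← inf_iSup_eq, iSup_natCast, inf_top_eq]
    _ ≤ ⨆ n, spanningTruncation μ w n t := by
      refine iSup_le fun n => le_iSup_of_le (max n N) ?_
      rw [spanningTruncation,
        Set.indicator_of_mem (monotone_spanningSets μ (le_max_right n N) hN)]
      exact min_le_min le_rfl (by exact_mod_cast le_max_left n N)

lemma lintegral_spanningTruncation_rpow_ne_top {κ : ℝ} (hκ : 0 < κ) (n : ℕ) :
    ∫⁻ t, spanningTruncation μ w n t ^ κ ∂μ ≠ ⊤ := by
  have hle : ∀ t, spanningTruncation μ w n t ^ κ ≤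
      (spanningSets μ n).indicator (fun _ => (n : ℝ≥0∞) ^ κ) t := by
    intro t
    by_cases ht : t ∈ spanningSets μ n
    · rw [Set.indicator_of_mem ht]
      exact rpow_le_rpow (spanningTruncation_le_natCast n t) hκ.le
    · simp [spanningTruncation, ht, zero_rpow_of_pos hκ]
  refine ne_top_of_le_ne_top ?_ (lintegral_mono hle)
  rw [lintegral_indicator_const (measurableSet_spanningSets μ n)]
  exact mul_ne_top (rpow_ne_top_of_nonneg hκ.le (natCast_ne_top n))
    (measure_spanningSets_lt_top μ n).ne

lemma lintegral_rpow_le_of_mul_bound {p q κ : ℝ} (hq : 0 < q) (hpq : q < p)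
    (hκ : κ = p * q / (p - q)) (hw : Measurable w) {K : ℝ≥0∞}
    (hmul : ∀ f : T → ℝ≥0∞, Measurable f → (∀ t, f t ≠ ⊤) →
      (∫⁻ t, (f t * w t) ^ q ∂μ) ^ (1 / q) ≤ K * (∫⁻ t, f t ^ p ∂μ) ^ (1 / p)) :
    ∫⁻ t, w t ^ κ ∂μ ≤ K ^ κ := by
  have hκ0 : 0 < κ := hκ ▸ mul_div_sub_pos hq hpq
  have htrunc (n : ℕ) : ∫⁻ t, spanningTruncation μ w n t ^ κ ∂μ ≤ K ^ κ := by
    refine lintegral_rpow_le_of_mul_bound_of_ne_top hq hpq hκ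
      (measurable_spanningTruncation hw n) (spanningTruncation_ne_top n)
      (lintegral_spanningTruncation_rpow_ne_top hκ0 n) fun f hf hf_top => ?_
    refine le_trans ?_ (hmul f hf hf_top)
    gcongr with t
    exact spanningTruncation_le_self n t
  calc ∫⁻ t, w t ^ κ ∂μ = ∫⁻ t, ⨆ n, spanningTruncation μ w n t ^ κ ∂μ := by
        refine lintegral_congr fun t => ?_
        rw [← iSup_spanningTruncation (μ := μ) (w := w) t]
        exact (orderIsoRpow κ hκ0).map_iSup _
    _ = ⨆ n, ∫⁻ t, spanningTruncation μ w n t ^ κ ∂μ :=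
        lintegral_iSup (fun n => (measurable_spanningTruncation hw n).pow_const κ)
          fun m n hmn t => rpow_le_rpow (monotone_spanningTruncation hmn t) hκ0.le
    _ ≤ K ^ κ := iSup_le htrunc

end MultiplicationOperator

section Sections

variable {S T : Type*} [MeasurableSpace S] [MeasurableSpace T] {ν : Measure S}
  {F : Set (S × T)}

lemma setLIntegral_section_eq_lintegral_indicator (hF : MeasurableSet F) (G : S × T → ℝ≥0∞)
    (t : T) : ∫⁻ s in {s | (s, t) ∈ F}, G (s, t) ∂ν = ∫⁻ s, F.indicator G (s, t) ∂ν := by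
  rw [← lintegral_indicator (s := {s | (s, t) ∈ F}) (measurable_prodMk_right hF)]
  exact lintegral_congr fun s => Set.indicator_comp_right (fun s => (s, t))

lemma measurable_setLIntegral_section [SFinite ν] (hF : MeasurableSet F) {G : S × T → ℝ≥0∞}
    (hG : Measurable G) : Measurable fun t => ∫⁻ s in {s | (s, t) ∈ F}, G (s, t) ∂ν := by
  simp_rw [setLIntegral_section_eq_lintegral_indicator hF]
  exact (hG.indicator hF).lintegral_prod_left'

lemma lintegral_restrict_withDensity_prod [SFinite ν] {μ : Measure T} [SFinite μ]
    (hF : MeasurableSet F) {J : S × T → ℝ≥0∞} (hJ : Measurable J) {G : S × T → ℝ≥0∞}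
    (hG : Measurable G) :
    ∫⁻ x, G x ∂((ν.prod μ).withDensity J).restrict F =
      ∫⁻ t, ∫⁻ s in {s | (s, t) ∈ F}, J (s, t) * G (s, t) ∂ν ∂μ := by
  rw [restrict_withDensity hF, lintegral_withDensity_eq_lintegral_mul _ hJ hG,
    ← lintegral_indicator hF, lintegral_prod_symm' _ ((hJ.mul hG).indicator hF)]
  exact lintegral_congr fun t => (setLIntegral_section_eq_lintegral_indicator hF (J * G) t).symm

lemma eLpNorm_mul_restrict_withDensity_prod [SFinite ν] {μ : Measure T} [SFinite μ]
    (hF : MeasurableSet F) {J : S × T → ℝ≥0∞} (hJ : Measurable J) {P : S × T → ℝ}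
    (hP : Measurable P) {f : T → ℝ} (hf : Measurable f) {q : ℝ} (hq : 0 < q) :
    eLpNorm (fun x => P x * f x.2) (ENNReal.ofReal q) (((ν.prod μ).withDensity J).restrict F) =
      (∫⁻ t, ‖f t‖ₑ ^ q *
        ∫⁻ s in {s | (s, t) ∈ F}, ENNReal.ofReal |P (s, t)| ^ q * J (s, t) ∂ν ∂μ) ^ (1 / q) := by
  have hPJ : Measurable fun x => ENNReal.ofReal |P x| ^ q * J x :=
    (hP.abs.ennreal_ofReal.pow_const q).mul hJ
  rw [eLpNorm_eq_lintegral_rpow_enorm_toReal (ofReal_pos.2 hq).ne' ofReal_ne_top,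
    toReal_ofReal hq.le, lintegral_restrict_withDensity_prod (G := fun x => ‖P x * f x.2‖ₑ ^ q)
      hF hJ ((hP.mul (hf.comp measurable_snd)).enorm.pow_const q)]
  congr 1
  refine lintegral_congr fun t => ?_
  rw [← lintegral_const_mul (f := fun s => ENNReal.ofReal |P (s, t)| ^ q * J (s, t)) _
    (hPJ.comp measurable_prodMk_right)]
  refine lintegral_congr fun s => ?_
  simp only [enorm_mul, mul_rpow_of_nonneg _ _ hq.le, Real.enorm_eq_ofReal_abs]
  ring

end Sections

/-- Necessity for the mixed operator `M_F[f](s,t) = P(s,t) f(t)` with `1 ≤ q < p < ∞`: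
if `M_F : L^p(T,μ) → L^q(F,λ)` is bounded (`λ ≪ ν × μ` with density `J`), then
`t ↦ (∫_{F_t} |P(s,t)|^q J(s,t) dν(s))^{1/q}` belongs to `L^κ(T,μ)`, `κ = pq/(p-q)`. -/
theorem mixed_operator_necessity_memLkappa
    {T S : Type*} [MeasurableSpace T] [MeasurableSpace S]
    (μ : Measure T) (ν : Measure S) [SigmaFinite μ] [SigmaFinite ν]
    (p q κ : ℝ) (hq : 1 ≤ q) (hpq : q < p) (hκ : κ = p * q / (p - q))
    (F : Set (S × T)) (hF : MeasurableSet F)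
    (J : S × T → ℝ≥0∞) (hJ : Measurable J)
    (lam : Measure (S × T))
    (hlam : lam = ((ν.prod μ).withDensity J).restrict F)
    (P : S × T → ℝ) (hP : Measurable P)
    (K : ℝ≥0∞) (hK : K ≠ ⊤)
    (hbdd : ∀ f : T → ℝ, Measurable f →
      eLpNorm (fun x : S × T => P x * f x.2) (ENNReal.ofReal q) lam ≤
        K * eLpNorm f (ENNReal.ofReal p) μ) :
    ∫⁻ t, ((∫⁻ s in {s | (s, t) ∈ F},
        ENNReal.ofReal |P (s, t)| ^ q * J (s, t) ∂ν) ^ (1 / q)) ^ κ ∂μ ≠ ⊤ := by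
  have hq0 : 0 < q := zero_lt_one.trans_le hq
  have hp0 : 0 < p := hq0.trans hpq
  have hw : Measurable fun t => (∫⁻ s in {s | (s, t) ∈ F},
      ENNReal.ofReal |P (s, t)| ^ q * J (s, t) ∂ν) ^ (1 / q) :=
    (measurable_setLIntegral_section hF ((hP.abs.ennreal_ofReal.pow_const q).mul hJ)).pow_const _
  refine ne_top_of_le_ne_top (rpow_ne_top_of_nonneg (hκ ▸ mul_div_sub_pos hq0 hpq).le hK)
    (lintegral_rpow_le_of_mul_bound hq0 hpq hκ hw fun f hf hf_top => ?_)
  have hbound := hbdd (fun t => (f t).toReal) hf.ennreal_toReal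
  have henorm (t : T) : ‖(f t).toReal‖ₑ = f t := by
    rw [Real.enorm_of_nonneg toReal_nonneg, ofReal_toReal (hf_top t)]
  rw [hlam, eLpNorm_mul_restrict_withDensity_prod hF hJ hP hf.ennreal_toReal hq0,
    eLpNorm_eq_lintegral_rpow_enorm_toReal (ofReal_pos.2 hp0).ne' ofReal_ne_top,
    toReal_ofReal hp0.le] at hbound
  simp only [henorm] at hbound
  convert hbound using 4 with t
  rw [mul_rpow_of_nonneg _ _ hq0.le, ← rpow_mul, one_div_mul_cancel hq0.ne', rpow_one]
end
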